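/- Let M, N, m be positive integers with m ≥ 2, and let ζ_1, …, ζ_{m−1} ∈ P^-_N(M). If (u_1, …, u_m) and (v_1, …, v_m), with all u_i, v_i ∈ P^+_N(M), are two (possibly identical) solutions of the system, then Σ_{i=1}^{m−1} ~u_i(z)·v_i(z) + u_m(z)·~v_m(z) ∈ P^-(M), i.e., all coefficients of this Laurent matrix polynomial at positive powers of z vanish. -/

import Mathlib

noncomputable section

/-- The type of `M × M` Laurent matrix polynomials over `ℂ`. -/
abbrev LMP (M : ℕ) := Matrix (Fin M) (Fin M) (LaurentPolynomial ℂ)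

/-- The adjoint of a scalar Laurent polynomial: `~p(z) = Σ conj(A_n) z^{-n}`. -/
def lpAdj (p : LaurentPolynomial ℂ) : LaurentPolynomial ℂ :=
  AddMonoidAlgebra.ofCoeff
    (Finsupp.equivMapDomain (Equiv.neg ℤ) (Finsupp.mapRange (starRingEnd ℂ) (map_zero _) p.coeff))

/-- The adjoint of a Laurent matrix polynomial: `~P(z) = Σ A_nᴴ z^{-n}`. -/
def adjM {n : Type*} (P : Matrix n n (LaurentPolynomial ℂ)) :
    Matrix n n (LaurentPolynomial ℂ) :=
  fun i j => lpAdj (P j i)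

/-- The coefficient of `z^n` of a Laurent matrix polynomial, an `M × M` complex matrix. -/
def coeffM {M : ℕ} (P : LMP M) (n : ℤ) : Matrix (Fin M) (Fin M) ℂ :=
  fun i j => (P i j).coeff n

/-- `P^+(M)`: Laurent matrix polynomials with vanishing coefficients at negative powers. -/
def Pplus (M : ℕ) : Set (LMP M) := {P | ∀ n : ℤ, n < 0 → coeffM P n = 0}

/-- `P^-(M)`: Laurent matrix polynomials with vanishing coefficients at positive powers. -/
def Pminus (M : ℕ) : Set (LMP M) := {P | ∀ n : ℤ, 0 < n → coeffM P n = 0}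

/-- `P^+_N(M)`: coefficients vanish unless `0 ≤ n ≤ N`. -/
def PplusN (M N : ℕ) : Set (LMP M) := {P | ∀ n : ℤ, (n < 0 ∨ (N : ℤ) < n) → coeffM P n = 0}

/-- `P^-_N(M)`: coefficients vanish unless `-N ≤ n ≤ 0`. -/
def PminusN (M N : ℕ) : Set (LMP M) := {P | ∀ n : ℤ, (n < -(N : ℤ) ∨ 0 < n) → coeffM P n = 0}

/-- `(x_1, …, x_{m-1}, x_m)` is a solution of the system (2.2). -/
def IsSolution (M N m : ℕ) (ζ : Fin (m - 1) → LMP M)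
    (x : Fin (m - 1) → LMP M) (xm : LMP M) : Prop :=
  (∀ j, x j ∈ PplusN M N) ∧ xm ∈ PplusN M N ∧
    (∀ j, xm * ζ j - adjM (x j) ∈ Pplus M) ∧
    ((∑ j, ζ j * x j) + adjM xm ∈ Pplus M)

/-!
Put `T := v_m (Σ_j ζ_j u_j + ~u_m) - Σ_j (v_m ζ_j - ~v_j) u_j`. Each summand is a product of
factors in `P^+`, which is a ring, so `T ∈ P^+`. Expanding, the `ζ_j` cancel and
`T = Σ_j ~v_j u_j + v_m ~u_m`, whose adjoint is the sum in question; the adjoint maps `P^+`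
into `P^-`.
-/

open LaurentPolynomial Matrix

lemma lpAdj_eq_invert_map (p : LaurentPolynomial ℂ) :
    lpAdj p = invert (AddMonoidAlgebra.mapRingHom ℤ (starRingEnd ℂ) p) := by
  ext n
  simp [lpAdj]

lemma coeff_lpAdj (p : LaurentPolynomial ℂ) (n : ℤ) :
    (lpAdj p).coeff n = starRingEnd ℂ (p.coeff (-n)) := by
  simp [lpAdj_eq_invert_map]

/-- On the unit circle `z⁻¹ = conj z`, so `lpAdj` is pointwise complex conjugation there. -/
instance : StarRing (LaurentPolynomial ℂ) where
  star := lpAdj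
  star_involutive p := by ext n; simp [coeff_lpAdj]
  star_mul p q := by
    show lpAdj (p * q) = lpAdj q * lpAdj p
    simp only [lpAdj_eq_invert_map, map_mul, mul_comm]
  star_add p q := by
    show lpAdj (p + q) = lpAdj p + lpAdj q
    simp only [lpAdj_eq_invert_map, map_add]

lemma coeff_star (p : LaurentPolynomial ℂ) (n : ℤ) :
    (star p).coeff n = starRingEnd ℂ (p.coeff (-n)) :=
  coeff_lpAdj p n

lemma adjM_eq_conjTranspose {n : Type*} (P : Matrix n n (LaurentPolynomial ℂ)) :
    adjM P = Pᴴ :=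
  rfl

def LaurentPolynomial.nonnegSubring (R : Type*) [Ring R] : Subring R[T;T⁻¹] where
  carrier := {p | ∀ n < 0, p.coeff n = 0}
  zero_mem' _ _ := rfl
  one_mem' n hn := by
    simp only [AddMonoidAlgebra.one_def, AddMonoidAlgebra.coeff_single, Finsupp.single_apply,
      if_neg hn.ne']
  add_mem' hp hq n hn := by simp [hp n hn, hq n hn]
  neg_mem' hp n hn := by simp [hp n hn]
  mul_mem' {p q} hp hq n hn := by
    classical
    rw [AddMonoidAlgebra.coeff_mul]
    refine Finset.sum_eq_zero fun a _ => Finset.sum_eq_zero fun b _ => ?_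
    dsimp only
    split_ifs with hab
    · rcases lt_or_ge a 0 with ha | ha
      · simp [hp a ha]
      · simp [hq b (by omega)]
    · rfl

lemma mem_Pplus_iff_mem_matrix {M : ℕ} {P : LMP M} :
    P ∈ Pplus M ↔ P ∈ (nonnegSubring ℂ).matrix :=
  ⟨fun h i j n hn => congrFun (congrFun (h n hn) i) j,
    fun h n hn => funext fun i => funext fun j => h i j n hn⟩

lemma PplusN_subset_Pplus (M N : ℕ) : PplusN M N ⊆ Pplus M :=
  fun _ hP n hn => hP n (Or.inl hn)

lemma conjTranspose_mem_Pminus {M : ℕ} {P : LMP M} (hP : P ∈ Pplus M) : Pᴴ ∈ Pminus M := by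
  rw [mem_Pplus_iff_mem_matrix] at hP
  intro n hn
  funext i j
  simp only [coeffM, conjTranspose_apply, coeff_star, hP j i (-n) (by omega), map_zero,
    Matrix.zero_apply]

theorem Subring.sum_mul_add_mul_mem {R ι : Type*} [Ring R] [Fintype ι] (S : Subring R)
    {ζ u w : ι → R} {a b : R} (hu : ∀ j, u j ∈ S) (ha : ∑ j, ζ j * u j + a ∈ S) (hb : b ∈ S)
    (hw : ∀ j, b * ζ j - w j ∈ S) : ∑ j, w j * u j + b * a ∈ S := by
  have key : ∑ j, w j * u j + b * a = b * (∑ j, ζ j * u j + a) - ∑ j, (b * ζ j - w j) * u j := by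
    simp only [mul_add, Finset.mul_sum, sub_mul, Finset.sum_sub_distrib, mul_assoc]
    abel
  rw [key]
  exact sub_mem (mul_mem hb ha) (sum_mem fun j _ => mul_mem (hw j) (hu j))

theorem lemma_sum_mem_Pminus_general (M N m : ℕ)
    (ζ : Fin (m - 1) → LMP M)
    (u : Fin (m - 1) → LMP M) (um : LMP M)
    (v : Fin (m - 1) → LMP M) (vm : LMP M)
    (hu : IsSolution M N m ζ u um) (hv : IsSolution M N m ζ v vm) :
    (∑ i, adjM (u i) * v i) + um * adjM vm ∈ Pminus M := by
  obtain ⟨hu, -, -, hum⟩ := hu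
  obtain ⟨-, hvm, hv, -⟩ := hv
  simp only [adjM_eq_conjTranspose] at *
  have hT : ∑ j, (v j)ᴴ * u j + vm * umᴴ ∈ Pplus M := by
    simp only [mem_Pplus_iff_mem_matrix] at hum hv ⊢
    have hPplusN {P : LMP M} (hP : P ∈ PplusN M N) : P ∈ (nonnegSubring ℂ).matrix :=
      mem_Pplus_iff_mem_matrix.1 (PplusN_subset_Pplus M N hP)
    exact (nonnegSubring ℂ).matrix.sum_mul_add_mul_mem (w := fun j => (v j)ᴴ)
      (fun j => hPplusN (hu j)) hum (hPplusN hvm) hv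
  convert conjTranspose_mem_Pminus hT using 1
  simp [conjTranspose_sum]

/-- relation (3.4): for any two solutions `u`, `v` of the system,
`Σ_{i=1}^{m-1} ~u_i · v_i + u_m · ~v_m ∈ P^-(M)`. -/
theorem lemma_sum_mem_Pminus (M N m : ℕ) (hM : 0 < M) (hN : 0 < N) (hm : 2 ≤ m)
    (ζ : Fin (m - 1) → LMP M) (hζ : ∀ j, ζ j ∈ PminusN M N)
    (u : Fin (m - 1) → LMP M) (um : LMP M)
    (v : Fin (m - 1) → LMP M) (vm : LMP M)
    (hu : IsSolution M N m ζ u um) (hv : IsSolution M N m ζ v vm) :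
    (∑ i, adjM (u i) * v i) + um * adjM vm ∈ Pminus M :=
  lemma_sum_mem_Pminus_general M N m ζ u um v vm hu hv
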